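/- (Theorem 3.1, MSE formula.) Under the hypotheses of Theorem 3.1—with G_{kj}, D, ζ₀,…,ζ_q, c = f^{(p)}(t₀) − Σ_j ∫ f^{(j)} dζ_j and Q*_j = ζ_j + Σ_k c_k G_{kj} as there, and additionally D_{kl} = Σ_{i,j} ∬_{T_i×T_j} K_{ij}(t,s) G_{ki}(dt) G_{lj}(ds)—the minimal mean squared error equals M(Q*) = K_{pp}(t₀,t₀) + cᵀ D f^{(p)}(t₀) − Σ_j ∫_{T_j} K_{pj}(t₀,t) Q*_j(dt), where K_{ij}(t,s) = ∂^{i+j}K(t,s)/∂t^i∂s^j and M(Q) = K_{pp}(t₀,t₀) − 2 Σ_j ∫_{T_j} K_{pj}(t₀,s) Q_j(ds) + Σ_{i,j} ∬ K_{ij}(t,s) Q_i(dt) Q_j(ds). -/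

import Mathlib

open MeasureTheory

/-- Integral of a real function against a finite signed measure, via the Jordan
decomposition. -/
noncomputable def sInt {α : Type*} [MeasurableSpace α] (μ : SignedMeasure α) (g : α → ℝ) : ℝ :=
  (∫ x, g x ∂μ.toJordanDecomposition.posPart) - ∫ x, g x ∂μ.toJordanDecomposition.negPart

/-- The mixed partial derivative `∂^{i+j} K(t,s) / ∂t^i ∂s^j` of a kernel on `ℝ × ℝ`. -/
noncomputable def Kd (K : ℝ → ℝ → ℝ) (i j : ℕ) (t s : ℝ) : ℝ :=
  iteratedDeriv i (fun u => iteratedDeriv j (K u) s) t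

/-!
Write `Q* = ζ + ∑ₖ cₖ Gₖ`. The identities defining `ζ` and `G` say that `Q*` reproduces the
kernel up to derivatives of `f`,
`∑ᵢ ∫ K_{ij}(t,s) Q*ᵢ(dt) = K_{pj}(t₀,s) + ∑ₖ cₖ ∑ₗ D_{kl} f_l^{(j)}(s)`,
and the choice of `c` makes `Q*` unbiased: `∑ⱼ ∫ f^{(j)} dQ*ⱼ = f^{(p)}(t₀)`. After Fubini,
integrating the first identity against `Q*ⱼ` and using the second evaluates the quadratic term of
`M(Q*)` as `∑ⱼ ∫ K_{pj}(t₀,·) dQ*ⱼ + cᵀ D f^{(p)}(t₀)`, which gives the formula.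
-/

open Function

lemma contDiff_uncurry_deriv_fst {F : ℝ → ℝ → ℝ} {n : ℕ} (hF : ContDiff ℝ (n + 1) (uncurry F)) :
    ContDiff ℝ n (uncurry fun t s => deriv (fun u => F u s) t) :=
  (hF.comp (contDiff_snd.prodMk (contDiff_snd.comp contDiff_fst))).fderiv_apply
    (f := fun p : ℝ × ℝ => fun u => F u p.2) contDiff_fst contDiff_const le_rfl

lemma contDiff_uncurry_deriv_snd {F : ℝ → ℝ → ℝ} {n : ℕ} (hF : ContDiff ℝ (n + 1) (uncurry F)) :
    ContDiff ℝ n (uncurry fun t s => deriv (F t) s) :=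
  (hF.comp ((contDiff_fst.comp contDiff_fst).prodMk contDiff_snd)).fderiv_apply
    (f := fun p : ℝ × ℝ => F p.1) contDiff_snd contDiff_const le_rfl

lemma Kd_zero_left (K : ℝ → ℝ → ℝ) (j : ℕ) : Kd K 0 j = fun t => iteratedDeriv j (K t) := by
  ext t s; simp [Kd]

lemma Kd_zero_zero (K : ℝ → ℝ → ℝ) : Kd K 0 0 = K := by
  simp [Kd_zero_left]

lemma Kd_zero_succ (K : ℝ → ℝ → ℝ) (j : ℕ) :
    Kd K 0 (j + 1) = fun t s => deriv (Kd K 0 j t) s := by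
  simp [Kd_zero_left, iteratedDeriv_succ]

lemma Kd_succ (K : ℝ → ℝ → ℝ) (i j : ℕ) :
    Kd K (i + 1) j = fun t s => deriv (fun u => Kd K i j u s) t := by
  ext t s; simp [Kd, iteratedDeriv_succ]

lemma contDiff_uncurry_Kd_zero {K : ℝ → ℝ → ℝ} {N : ℕ} (hK : ContDiff ℝ N (uncurry K)) :
    ∀ {j : ℕ}, j ≤ N → ContDiff ℝ (N - j : ℕ) (uncurry (Kd K 0 j))
  | 0, _ => by rwa [Kd_zero_zero]
  | j + 1, hj => by
    have := contDiff_uncurry_Kd_zero hK (j := j) (by omega)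
    rw [show N - j = N - (j + 1) + 1 by omega] at this
    rw [Kd_zero_succ]
    exact contDiff_uncurry_deriv_snd this

lemma contDiff_uncurry_Kd {K : ℝ → ℝ → ℝ} {N : ℕ} (hK : ContDiff ℝ N (uncurry K)) {j : ℕ} :
    ∀ {i : ℕ}, i + j ≤ N → ContDiff ℝ (N - j - i : ℕ) (uncurry (Kd K i j))
  | 0, hij => contDiff_uncurry_Kd_zero hK (by omega)
  | i + 1, hij => by
    have := contDiff_uncurry_Kd hK (j := j) (i := i) (by omega)
    rw [show N - j - i = N - j - (i + 1) + 1 by omega] at this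
    rw [Kd_succ]
    exact contDiff_uncurry_deriv_fst this

section BddMeasurable

variable {α β : Type*} [MeasurableSpace α] [MeasurableSpace β]

/-- Bounded measurable functions are integrable against both Jordan parts of every signed
measure, so `sInt` is bilinear on them. -/
def BddMeasurable (g : α → ℝ) : Prop :=
  Measurable g ∧ ∃ C, ∀ x, |g x| ≤ C

namespace BddMeasurable

variable {g h : α → ℝ}

lemma integrable (hg : BddMeasurable g) (μ : Measure α) [IsFiniteMeasure μ] : Integrable g μ :=
  let ⟨hm, C, hC⟩ := hg
  (integrable_const C).mono' hm.aestronglyMeasurable (.of_forall hC)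

lemma comp (hg : BddMeasurable g) {e : β → α} (he : Measurable e) : BddMeasurable (g ∘ e) :=
  let ⟨hm, C, hC⟩ := hg
  ⟨hm.comp he, C, fun x => hC (e x)⟩

lemma sub (hg : BddMeasurable g) (hh : BddMeasurable h) : BddMeasurable fun x => g x - h x :=
  let ⟨hgm, C, hC⟩ := hg
  let ⟨hhm, C', hC'⟩ := hh
  ⟨hgm.sub hhm, C + C', fun x => (abs_sub _ _).trans (add_le_add (hC x) (hC' x))⟩

lemma add (hg : BddMeasurable g) (hh : BddMeasurable h) : BddMeasurable fun x => g x + h x :=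
  let ⟨hgm, C, hC⟩ := hg
  let ⟨hhm, C', hC'⟩ := hh
  ⟨hgm.add hhm, C + C', fun x => (abs_add_le _ _).trans (add_le_add (hC x) (hC' x))⟩

lemma const_mul (hg : BddMeasurable g) (r : ℝ) : BddMeasurable fun x => r * g x :=
  let ⟨hm, C, hC⟩ := hg
  ⟨measurable_const.mul hm, |r| * C, fun x => by
    rw [abs_mul]; exact mul_le_mul_of_nonneg_left (hC x) (abs_nonneg r)⟩

lemma finset_sum {ι : Type*} (s : Finset ι) {g : ι → α → ℝ} (hg : ∀ i, BddMeasurable (g i)) :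
    BddMeasurable fun x => ∑ i ∈ s, g i x := by
  classical
  induction s using Finset.induction_on with
  | empty => exact ⟨measurable_const, 0, by simp⟩
  | insert a s ha ih => simpa only [Finset.sum_insert ha] using (hg a).add ih

lemma integral_right {F : α → β → ℝ} (hF : BddMeasurable (uncurry F)) (ν : Measure β)
    [IsFiniteMeasure ν] : BddMeasurable fun x => ∫ y, F x y ∂ν := by
  obtain ⟨hm, C, hC⟩ := hF
  refine ⟨hm.stronglyMeasurable.integral_prod_right.measurable, C * ν.real Set.univ, fun x => ?_⟩
  have hFx : ∀ y, ‖F x y‖ ≤ C := fun y => (Real.norm_eq_abs _).trans_le (hC (x, y))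
  simpa only [Real.norm_eq_abs] using norm_integral_le_of_norm_le_const (.of_forall hFx)

lemma sInt_right {F : α → β → ℝ} (hF : BddMeasurable (uncurry F)) (ν : SignedMeasure β) :
    BddMeasurable fun x => sInt ν (F x) :=
  (hF.integral_right _).sub (hF.integral_right _)

lemma swap {F : α → β → ℝ} (hF : BddMeasurable (uncurry F)) :
    BddMeasurable (uncurry fun y x => F x y) :=
  hF.comp measurable_swap

end BddMeasurable

end BddMeasurable

section sInt

variable {α β : Type*} [MeasurableSpace α] [MeasurableSpace β]

lemma sInt_eq_of_eq_sub {μ : SignedMeasure α} {c d : Measure α} [IsFiniteMeasure c]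
    [IsFiniteMeasure d] (hμ : μ = c.toSignedMeasure - d.toSignedMeasure) {g : α → ℝ}
    (hg : BddMeasurable g) : sInt μ g = (∫ x, g x ∂c) - ∫ x, g x ∂d := by
  set j := μ.toJordanDecomposition
  have hj : j.posPart + d = c + j.negPart := by
    rw [← Measure.toSignedMeasure_eq_toSignedMeasure_iff, Measure.toSignedMeasure_add,
      Measure.toSignedMeasure_add, ← sub_eq_sub_iff_add_eq_add, ← hμ,
      ← JordanDecomposition.toSignedMeasure, SignedMeasure.toSignedMeasure_toJordanDecomposition]
  have := congrArg (fun ν => ∫ x, g x ∂ν) hj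
  simp only [integral_add_measure (hg.integrable _) (hg.integrable _)] at this
  rw [sInt]
  linarith

lemma sInt_add_measure (μ ν : SignedMeasure α) {g : α → ℝ} (hg : BddMeasurable g) :
    sInt (μ + ν) g = sInt μ g + sInt ν g := by
  rw [sInt_eq_of_eq_sub (c := μ.toJordanDecomposition.posPart + ν.toJordanDecomposition.posPart)
    (d := μ.toJordanDecomposition.negPart + ν.toJordanDecomposition.negPart) ?_ hg,
    integral_add_measure (hg.integrable _) (hg.integrable _),
    integral_add_measure (hg.integrable _) (hg.integrable _), sInt, sInt]
  · ring
  · conv_lhs => rw [← μ.toSignedMeasure_toJordanDecomposition,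
      ← ν.toSignedMeasure_toJordanDecomposition]
    simp only [JordanDecomposition.toSignedMeasure, Measure.toSignedMeasure_add]
    abel

lemma sInt_smul_measure (r : ℝ) (μ : SignedMeasure α) (g : α → ℝ) :
    sInt (r • μ) g = r * sInt μ g := by
  simp only [sInt, SignedMeasure.toJordanDecomposition_smul_real]
  rcases le_or_gt 0 r with hr | hr
  · rw [JordanDecomposition.real_smul_posPart_nonneg _ _ hr,
      JordanDecomposition.real_smul_negPart_nonneg _ _ hr, integral_smul_nnreal_measure,
      integral_smul_nnreal_measure]
    simp only [NNReal.smul_def, Real.coe_toNNReal _ hr, smul_eq_mul]; ring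
  · rw [JordanDecomposition.real_smul_posPart_neg _ _ hr,
      JordanDecomposition.real_smul_negPart_neg _ _ hr, integral_smul_nnreal_measure,
      integral_smul_nnreal_measure]
    simp only [NNReal.smul_def, Real.coe_toNNReal _ (neg_nonneg.2 hr.le), smul_eq_mul]; ring

lemma sInt_finset_sum_measure {κ : Type*} (s : Finset κ) (μ : κ → SignedMeasure α) {g : α → ℝ}
    (hg : BddMeasurable g) : sInt (∑ k ∈ s, μ k) g = ∑ k ∈ s, sInt (μ k) g :=
  map_sum (AddMonoidHom.mk' (sInt · g) fun μ ν => sInt_add_measure μ ν hg) μ s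

lemma sInt_add {μ : SignedMeasure α} {g h : α → ℝ} (hg : BddMeasurable g)
    (hh : BddMeasurable h) :
    sInt μ (fun x => g x + h x) = sInt μ g + sInt μ h := by
  simp only [sInt, integral_add (hg.integrable _) (hh.integrable _)]; ring

lemma sInt_sub {μ : SignedMeasure α} {g h : α → ℝ} (hg : BddMeasurable g)
    (hh : BddMeasurable h) :
    sInt μ (fun x => g x - h x) = sInt μ g - sInt μ h := by
  simp only [sInt, integral_sub (hg.integrable _) (hh.integrable _)]; ring

lemma sInt_const_mul (μ : SignedMeasure α) (r : ℝ) (g : α → ℝ) :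
    sInt μ (fun x => r * g x) = r * sInt μ g := by
  simp only [sInt, integral_const_mul]; ring

lemma sInt_finset_sum {ι : Type*} (s : Finset ι) (μ : SignedMeasure α) {g : ι → α → ℝ}
    (hg : ∀ i, BddMeasurable (g i)) :
    sInt μ (fun x => ∑ i ∈ s, g i x) = ∑ i ∈ s, sInt μ (g i) := by
  simp only [sInt, integral_finsetSum s fun i _ => (hg i).integrable _, Finset.sum_sub_distrib]

lemma integral_sInt_comm (a : Measure α) [IsFiniteMeasure a] (ν : SignedMeasure β)
    {F : α → β → ℝ} (hF : BddMeasurable (uncurry F)) :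
    ∫ x, sInt ν (F x) ∂a = sInt ν fun y => ∫ x, F x y ∂a := by
  simp only [sInt]
  rw [integral_sub ((hF.integral_right _).integrable _) ((hF.integral_right _).integrable _),
    integral_integral_swap (hF.integrable _), integral_integral_swap (hF.integrable _)]

lemma sInt_sInt_comm (μ : SignedMeasure α) (ν : SignedMeasure β) {F : α → β → ℝ}
    (hF : BddMeasurable (uncurry F)) :
    sInt μ (fun x => sInt ν (F x)) = sInt ν fun y => sInt μ fun x => F x y := by
  rw [sInt, integral_sInt_comm _ _ hF, integral_sInt_comm _ _ hF,
    ← sInt_sub (hF.swap.integral_right _) (hF.swap.integral_right _)]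
  rfl

end sInt

section FamilyOfSignedMeasures

variable {ι κ : Type*} [Fintype ι] [Fintype κ] {X : ι → Type*} [∀ i, MeasurableSpace (X i)]

lemma sum_sInt_add_sum_smul (ζ : ∀ i, SignedMeasure (X i)) (G : κ → ∀ i, SignedMeasure (X i))
    (c : κ → ℝ) {g : ∀ i, X i → ℝ} (hg : ∀ i, BddMeasurable (g i)) :
    ∑ i, sInt (ζ i + ∑ k, c k • G k i) (g i)
      = ∑ i, sInt (ζ i) (g i) + ∑ k, c k * ∑ i, sInt (G k i) (g i) := by
  simp only [sInt_add_measure _ _ (hg _), sInt_finset_sum_measure _ _ (hg _), sInt_smul_measure,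
    Finset.sum_add_distrib, Finset.mul_sum]
  exact congrArg _ Finset.sum_comm

lemma sum_sInt_unbiased [DecidableEq κ] (ζ : ∀ i, SignedMeasure (X i))
    (G : κ → ∀ i, SignedMeasure (X i)) (c : κ → ℝ) {φ : κ → ∀ i, X i → ℝ}
    (hφ : ∀ k i, BddMeasurable (φ k i)) (a : κ → ℝ)
    (hG : ∀ k l, ∑ i, sInt (G l i) (φ k i) = if k = l then 1 else 0)
    (hc : ∀ k, c k = a k - ∑ i, sInt (ζ i) (φ k i)) (l : κ) :
    ∑ i, sInt (ζ i + ∑ k, c k • G k i) (φ l i) = a l := by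
  rw [sum_sInt_add_sum_smul _ _ _ (hφ l)]
  simp only [hG, mul_ite, mul_one, mul_zero, Finset.sum_ite_eq, Finset.mem_univ, if_true, hc l]
  ring

lemma sum_sInt_kernel (ζ : ∀ i, SignedMeasure (X i)) (G : κ → ∀ i, SignedMeasure (X i))
    (c : κ → ℝ) (D : κ → κ → ℝ) {K : ∀ i j, X i → X j → ℝ}
    (hK : ∀ i j s, BddMeasurable (K i j · s)) {h : ∀ j, X j → ℝ} {φ : κ → ∀ j, X j → ℝ}
    (hG : ∀ j s k, ∑ i, sInt (G k i) (fun t => K i j t s) = ∑ l, D k l * φ l j s)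
    (hζ : ∀ j s, ∑ i, sInt (ζ i) (fun t => K i j t s) = h j s) (j : ι) (s : X j) :
    ∑ i, sInt (ζ i + ∑ k, c k • G k i) (fun t => K i j t s)
      = h j s + ∑ k, c k * ∑ l, D k l * φ l j s := by
  rw [sum_sInt_add_sum_smul _ _ _ fun i => hK i j s, hζ]
  simp only [hG]

lemma sum_sInt_sInt_eq_of_reproducing (Q : ∀ i, SignedMeasure (X i)) {K : ∀ i j, X i → X j → ℝ}
    (hK : ∀ i j, BddMeasurable (uncurry (K i j))) {h : ∀ j, X j → ℝ}
    (hh : ∀ j, BddMeasurable (h j)) (c : κ → ℝ) (D : κ → κ → ℝ) {φ : κ → ∀ j, X j → ℝ}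
    (hφ : ∀ l j, BddMeasurable (φ l j)) (a : κ → ℝ)
    (hQK : ∀ j s,
      ∑ i, sInt (Q i) (fun t => K i j t s) = h j s + ∑ k, c k * ∑ l, D k l * φ l j s)
    (hQφ : ∀ l, ∑ j, sInt (Q j) (φ l j) = a l) :
    ∑ i, ∑ j, sInt (Q i) (fun t => sInt (Q j) (K i j t))
      = ∑ j, sInt (Q j) (h j) + ∑ k, c k * ∑ l, D k l * a l := by
  have hDφ : ∀ j k, BddMeasurable fun s => ∑ l, D k l * φ l j s := fun j k =>
    BddMeasurable.finset_sum _ fun l => (hφ l j).const_mul _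
  calc ∑ i, ∑ j, sInt (Q i) (fun t => sInt (Q j) (K i j t))
      = ∑ j, sInt (Q j) (fun s => ∑ i, sInt (Q i) (fun t => K i j t s)) := by
        rw [Finset.sum_comm]
        refine Finset.sum_congr rfl fun j _ => ?_
        rw [sInt_finset_sum _ _ fun i => (hK i j).swap.sInt_right (Q i)]
        exact Finset.sum_congr rfl fun i _ => sInt_sInt_comm _ _ (hK i j)
    _ = ∑ j, sInt (Q j) (fun s => h j s + ∑ k, c k * ∑ l, D k l * φ l j s) := by
        simp only [hQK]
    _ = ∑ j, (sInt (Q j) (h j) + ∑ k, c k * ∑ l, D k l * sInt (Q j) (φ l j)) := by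
        refine Finset.sum_congr rfl fun j _ => ?_
        rw [sInt_add (hh j) (BddMeasurable.finset_sum _ fun k => (hDφ j k).const_mul (c k)),
          sInt_finset_sum _ _ fun k => (hDφ j k).const_mul (c k)]
        simp only [sInt_const_mul, sInt_finset_sum _ _ fun l => (hφ l j).const_mul _]
    _ = ∑ j, sInt (Q j) (h j) + ∑ k, c k * ∑ l, D k l * a l := by
        simp only [← hQφ, Finset.sum_add_distrib, Finset.mul_sum]
        congr 1
        rw [Finset.sum_comm]
        exact Finset.sum_congr rfl fun k _ => Finset.sum_comm

end FamilyOfSignedMeasures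

theorem blup_derivatives_mse_value_general {q m : ℕ}
    (K : ℝ → ℝ → ℝ) (hK : ContDiff ℝ (2 * q : ℕ) (Function.uncurry K))
    (hKdbd : ∀ i j : Fin (q + 1), ∃ C, ∀ t s, |Kd K i.1 j.1 t s| ≤ C)
    (T : Fin (q + 1) → Set ℝ)
    (p : Fin (q + 1)) (t0 : ℝ)
    (f : ℝ → Fin m → ℝ) (hf : ∀ k, ContDiff ℝ (q : ℕ) fun t => f t k)
    (hfbd : ∀ j : Fin (q + 1), ∃ C, ∀ t k, |iteratedDeriv j.1 (fun u => f u k) t| ≤ C)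
    (G : Fin m → ∀ j, SignedMeasure (T j)) (D : Fin m → Fin m → ℝ)
    (hG1 : ∀ k l, (∑ j, sInt (G l j) fun t => iteratedDeriv j.1 (fun u => f u k) t.1)
      = if k = l then 1 else 0)
    (hG2 : ∀ (i : Fin (q + 1)) (s : T i) (k : Fin m),
      (∑ j, sInt (G k j) fun t => Kd K j.1 i.1 t.1 s.1)
        = ∑ l, D k l * iteratedDeriv i.1 (fun u => f u l) s.1)
    (ζ : ∀ j, SignedMeasure (T j))
    (hζ : ∀ (i : Fin (q + 1)) (s : T i),
      (∑ j, sInt (ζ j) fun t => Kd K j.1 i.1 t.1 s.1) = Kd K p.1 i.1 t0 s.1)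
    (c : Fin m → ℝ)
    (hc : ∀ k, c k = iteratedDeriv p.1 (fun u => f u k) t0
      - ∑ j, sInt (ζ j) fun t => iteratedDeriv j.1 (fun u => f u k) t.1)
    (Qstar : ∀ j, SignedMeasure (T j))
    (hQstar : ∀ j, Qstar j = ζ j + ∑ k, c k • G k j)
    (M : (∀ j, SignedMeasure (T j)) → ℝ)
    (hM : ∀ Q : ∀ j, SignedMeasure (T j),
      M Q = Kd K p.1 p.1 t0 t0
        - 2 * ∑ j, sInt (Q j) (fun s => Kd K p.1 j.1 t0 s.1)
        + ∑ i, ∑ j, sInt (Q i) fun t => sInt (Q j) fun s => Kd K i.1 j.1 t.1 s.1) :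
    M Qstar = Kd K p.1 p.1 t0 t0
      + (∑ k, c k * ∑ l, D k l * iteratedDeriv p.1 (fun u => f u l) t0)
      - ∑ j, sInt (Qstar j) fun t => Kd K p.1 j.1 t0 t.1 := by
  have hKd : ∀ i j : Fin (q + 1), BddMeasurable (uncurry (Kd K i.1 j.1)) := fun i j =>
    let ⟨C, hC⟩ := hKdbd i j
    ⟨(contDiff_uncurry_Kd hK (by omega)).continuous.measurable, C, fun x => hC x.1 x.2⟩
  have hfd : ∀ l (j : Fin (q + 1)),
      BddMeasurable fun t : T j => iteratedDeriv j.1 (fun u => f u l) t.1 := fun l j =>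
    let ⟨C, hC⟩ := hfbd j
    ⟨((hf l).continuous_iteratedDeriv j.1 (by exact_mod_cast j.is_le)).measurable.comp
      measurable_subtype_coe, C, fun t => hC t.1 l⟩
  have hker : ∀ i j : Fin (q + 1),
      BddMeasurable (uncurry fun (t : T i) (s : T j) => Kd K i.1 j.1 t.1 s.1) := fun i j =>
    (hKd i j).comp (measurable_subtype_coe.prodMap measurable_subtype_coe)
  have hcol : ∀ (i j : Fin (q + 1)) (s : T j),
      BddMeasurable fun t : T i => Kd K i.1 j.1 t.1 s.1 := fun i j s =>
    (hKd i j).comp (measurable_subtype_coe.prodMk measurable_const)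
  have hrow : ∀ j : Fin (q + 1), BddMeasurable fun s : T j => Kd K p.1 j.1 t0 s.1 := fun j =>
    (hKd p j).comp (measurable_const.prodMk measurable_subtype_coe)
  obtain rfl : Qstar = fun j => ζ j + ∑ k, c k • G k j := funext hQstar
  rw [hM, sum_sInt_sInt_eq_of_reproducing _ hker hrow c D hfd _
    (sum_sInt_kernel ζ G c D hcol hG2 hζ) (sum_sInt_unbiased ζ G c hfd _ hG1 hc)]
  ring

/-- Theorem 3.1, MSE formula.  Under the hypotheses of Theorem 3.1, with
`D` the covariance matrix of the BLUE, the minimal mean squared error equals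
`M(Q*) = K_{pp}(t₀,t₀) + cᵀ D f^{(p)}(t₀) − Σ_j ∫_{T_j} K_{pj}(t₀,t) Q*_j(dt)`. -/
theorem blup_derivatives_mse_value {q m : ℕ}
    (K : ℝ → ℝ → ℝ) (hK : ContDiff ℝ (2 * q : ℕ) (Function.uncurry K))
    (hKdbd : ∀ i j : Fin (q + 1), ∃ C, ∀ t s, |Kd K i.1 j.1 t s| ≤ C)
    (T : Fin (q + 1) → Set ℝ) (hT : ∀ i, MeasurableSet (T i))
    (p : Fin (q + 1)) (t0 : ℝ) (ht0 : t0 ∉ T p)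
    (f : ℝ → Fin m → ℝ) (hf : ∀ k, ContDiff ℝ (q : ℕ) fun t => f t k)
    (hfbd : ∀ j : Fin (q + 1), ∃ C, ∀ t k, |iteratedDeriv j.1 (fun u => f u k) t| ≤ C)
    (hpos : ∀ R : ∀ i, SignedMeasure (T i),
      0 ≤ ∑ i, ∑ j, sInt (R i) fun t => sInt (R j) fun s => Kd K i.1 j.1 t.1 s.1)
    (G : Fin m → ∀ j, SignedMeasure (T j)) (D : Fin m → Fin m → ℝ)
    (hG1 : ∀ k l, (∑ j, sInt (G l j) fun t => iteratedDeriv j.1 (fun u => f u k) t.1)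
      = if k = l then 1 else 0)
    (hG2 : ∀ (i : Fin (q + 1)) (s : T i) (k : Fin m),
      (∑ j, sInt (G k j) fun t => Kd K j.1 i.1 t.1 s.1)
        = ∑ l, D k l * iteratedDeriv i.1 (fun u => f u l) s.1)
    -- `D` is the covariance matrix of the BLUE:
    (hD : ∀ k l, D k l
      = ∑ i, ∑ j, sInt (G k i) fun t => sInt (G l j) fun s => Kd K i.1 j.1 t.1 s.1)
    (ζ : ∀ j, SignedMeasure (T j))
    (hζ : ∀ (i : Fin (q + 1)) (s : T i),
      (∑ j, sInt (ζ j) fun t => Kd K j.1 i.1 t.1 s.1) = Kd K p.1 i.1 t0 s.1)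
    (c : Fin m → ℝ)
    (hc : ∀ k, c k = iteratedDeriv p.1 (fun u => f u k) t0
      - ∑ j, sInt (ζ j) fun t => iteratedDeriv j.1 (fun u => f u k) t.1)
    (Qstar : ∀ j, SignedMeasure (T j))
    (hQstar : ∀ j, Qstar j = ζ j + ∑ k, c k • G k j)
    (M : (∀ j, SignedMeasure (T j)) → ℝ)
    (hM : ∀ Q : ∀ j, SignedMeasure (T j),
      M Q = Kd K p.1 p.1 t0 t0
        - 2 * ∑ j, sInt (Q j) (fun s => Kd K p.1 j.1 t0 s.1)
        + ∑ i, ∑ j, sInt (Q i) fun t => sInt (Q j) fun s => Kd K i.1 j.1 t.1 s.1) :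
    M Qstar = Kd K p.1 p.1 t0 t0
      + (∑ k, c k * ∑ l, D k l * iteratedDeriv p.1 (fun u => f u l) t0)
      - ∑ j, sInt (Qstar j) fun t => Kd K p.1 j.1 t0 t.1 :=
  blup_derivatives_mse_value_general K hK hKdbd T p t0 f hf hfbd G D hG1 hG2 ζ hζ c hc Qstar hQstar
    M hM
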